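/- Let ρ be a complex number with 1 − 1/(4L) ≤ Re(ρ) < 1 and |Im(ρ)| > 1/(4L) for some L > 0. Then 0 < 1/(1−ρ) + 1/(1−ρ̄) < 5·(1/(1 + 1/L − ρ) + 1/(1 + 1/L − ρ̄)). -/

import Mathlib

/-!
Write `w = 1 - ρ = a + bi` and `c = 1/L`. For any `z ≠ 0`, `1/z + 1/z̄ = 2 Re z / |z|²`, so the
claim reads `0 < 2a/(a² + b²) < 10(a + c)/((a + c)² + b²)` with `0 < a ≤ c/4 < |b|`. Clearing
denominators, the difference is `4a³ + 3a²c + 4ab² + 5cb² - ac²`, and the only negative term is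
beaten by `5cb²`: `4ac² ≤ c³ < 16cb²`.
-/

open Complex ComplexConjugate

theorem mul_sq_add_sq_lt_five_mul {a b c : ℝ} (ha : 0 < a) (hac : 4 * a ≤ c) (hbc : c < 4 * |b|) :
    a * ((a + c) ^ 2 + b ^ 2) < 5 * (a + c) * (a ^ 2 + b ^ 2) := by
  have hc : 0 < c := by linarith
  have hcb : c ^ 2 < 16 * b ^ 2 := by
    have := pow_lt_pow_left₀ hbc hc.le two_ne_zero
    rw [mul_pow, sq_abs] at this
    linarith
  have hac2 : 4 * a * c ^ 2 ≤ c * c ^ 2 := mul_le_mul_of_nonneg_right hac (sq_nonneg c)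
  have hcb2 : c * c ^ 2 < c * (16 * b ^ 2) := mul_lt_mul_of_pos_left hcb hc
  nlinarith [pow_pos ha 3, mul_pos (mul_pos ha ha) hc, mul_nonneg ha.le (sq_nonneg b),
    mul_nonneg hc.le (sq_nonneg b)]

namespace Complex

theorem re_one_div_add_one_div_conj (w : ℂ) :
    (1 / w + 1 / conj w).re = 2 * w.re / normSq w := by
  simp only [add_re, div_re, one_re, one_im, conj_re, conj_im, normSq_conj]
  ring

theorem re_one_div_add_one_div_conj_pos {w : ℂ} (hw : 0 < w.re) :
    0 < (1 / w + 1 / conj w).re := by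
  rw [re_one_div_add_one_div_conj]
  exact div_pos (by positivity) (normSq_pos.2 (ne_zero_of_re_pos hw))

theorem re_one_div_add_one_div_conj_lt_five_mul {w : ℂ} {c : ℝ} (hw : 0 < w.re)
    (hwc : 4 * w.re ≤ c) (hc : c < 4 * |w.im|) :
    (1 / w + 1 / conj w).re < 5 * (1 / (w + c) + 1 / conj (w + c)).re := by
  have hwc0 : 0 < (w + c).re := by simp only [add_re, ofReal_re]; linarith
  rw [re_one_div_add_one_div_conj, re_one_div_add_one_div_conj, mul_div_assoc',
    div_lt_div_iff₀ (normSq_pos.2 (ne_zero_of_re_pos hw))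
      (normSq_pos.2 (ne_zero_of_re_pos hwc0))]
  simp only [normSq_apply, add_re, add_im, ofReal_re, ofReal_im, add_zero]
  nlinarith [mul_sq_add_sq_lt_five_mul hw hwc hc]

end Complex

open Complex in
theorem zero_sum_lt_5_general (L : ℝ) (ρ : ℂ)
    (h0 : 1 - 1 / (4 * L) ≤ ρ.re) (h1 : ρ.re < 1) (h2 : 1 / (4 * L) < |ρ.im|) :
    0 < (1 / (1 - ρ) + 1 / (1 - (starRingEnd ℂ) ρ)).re ∧
      (1 / (1 - ρ) + 1 / (1 - (starRingEnd ℂ) ρ)).re <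
        5 * (1 / (1 + 1 / L - ρ) + 1 / (1 + 1 / L - (starRingEnd ℂ) ρ)).re := by
  have hshift : (1 + 1 / L - ρ : ℂ) = 1 - ρ + ((1 / L : ℝ) : ℂ) := by push_cast; ring
  have hconj : 1 + 1 / L - conj ρ = conj (1 - ρ + ((1 / L : ℝ) : ℂ)) := by
    rw [← hshift]; simp
  have hquarter : 1 / (4 * L) = 1 / L / 4 := by ring
  rw [hconj, hshift, show 1 - conj ρ = conj (1 - ρ) by simp]
  have hw : 0 < (1 - ρ).re := by simpa using h1
  refine ⟨re_one_div_add_one_div_conj_pos hw, re_one_div_add_one_div_conj_lt_five_mul hw ?_ ?_⟩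
  · simp only [sub_re, one_re]; linarith
  · simp only [sub_im, one_im, zero_sub, abs_neg]; linarith

open Complex in
/-- Let `ρ ∈ ℂ` with `1 - 1/(4L) ≤ Re(ρ) < 1` and `|Im(ρ)| > 1/(4L)` for some `L > 0`. Then
`0 < 1/(1-ρ) + 1/(1-ρ̄) < 5·(1/(1 + 1/L - ρ) + 1/(1 + 1/L - ρ̄))` (these sums of
complex-conjugate terms are real, and the inequalities are between their real values). -/
theorem zero_sum_lt_5 (L : ℝ) (hL : 0 < L) (ρ : ℂ)
    (h0 : 1 - 1 / (4 * L) ≤ ρ.re) (h1 : ρ.re < 1) (h2 : 1 / (4 * L) < |ρ.im|) :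
    0 < (1 / (1 - ρ) + 1 / (1 - (starRingEnd ℂ) ρ)).re ∧
      (1 / (1 - ρ) + 1 / (1 - (starRingEnd ℂ) ρ)).re <
        5 * (1 / (1 + 1 / L - ρ) + 1 / (1 + 1 / L - (starRingEnd ℂ) ρ)).re :=
  zero_sum_lt_5_general L ρ h0 h1 h2
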